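/- Let kp⁺, γp⁻, γr⁻ > 0 and suppose the controller gains satisfy k2 > 0 and k1 > k2/(γp⁻ + γr⁻) − γr⁻·γp⁻/kp⁺. Then for every triple (kp, γp, γr) ∈ (0, kp⁺] × [γp⁻, ∞) × [γr⁻, ∞), the matrix Acl = [[−γr, −k1, k2], [kp, −γp, 0], [0, −1, 0]] is Hurwitz. -/

import Mathlib

/-!
The characteristic polynomial of `Acl` is the cubic
`λ³ + (γr + γp) λ² + (γr γp + kp k1) λ + kp k2`. By the Routh–Hurwitz criterion for cubics, all
its roots lie in the open left half-plane as soon as the three coefficients are positive and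
`kp k2 < (γr + γp)(γr γp + kp k1)`. Multiplying the gain condition by `kp ≤ kp⁺` gives
`kp k2 < (γp⁻ + γr⁻)(γr⁻ γp⁻ + kp k1)`, and the right-hand side only grows with `γp ≥ γp⁻` and
`γr ≥ γr⁻`.
-/

/-- A real square matrix is Hurwitz if all of its eigenvalues over `ℂ` have
negative real part. -/
def IsHurwitz {n : ℕ} (A : Matrix (Fin n) (Fin n) ℝ) : Prop :=
  ∀ μ ∈ spectrum ℂ (A.map Complex.ofReal), μ.re < 0

/-- Routh–Hurwitz criterion for monic real cubics. -/
theorem re_neg_of_cubic_eq_zero {a b c : ℝ} (ha : 0 < a) (hb : 0 < b) (hc : 0 < c)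
    (habc : c < a * b) {z : ℂ} (hz : z ^ 3 + a * z ^ 2 + b * z + c = 0) : z.re < 0 := by
  obtain ⟨x, y⟩ := z
  have hre := congrArg Complex.re hz
  have him := congrArg Complex.im hz
  simp only [pow_succ, pow_zero, one_mul, Complex.add_re, Complex.mul_re, Complex.ofReal_re,
    Complex.ofReal_im, Complex.add_im, Complex.mul_im, Complex.zero_re, Complex.zero_im] at hre him
  dsimp only
  by_contra! hx
  rcases eq_or_ne y 0 with rfl | hy
  · nlinarith [mul_nonneg hx hx, mul_nonneg (mul_nonneg hx hx) hx]
  · -- For a non-real root, eliminating `y²` from the real part leaves a cubic in `x` whose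
    -- coefficients are positive exactly because `c < a b`.
    have hy2 : y ^ 2 = 3 * x ^ 2 + 2 * a * x + b := by
      apply mul_left_cancel₀ hy
      linear_combination (-1) * him
    have hx_root : 8 * x ^ 3 + 8 * a * x ^ 2 + 2 * (a ^ 2 + b) * x + (a * b - c) = 0 := by
      linear_combination (-1) * hre + (-(3 * x) - a) * hy2
    nlinarith [mul_nonneg hx hx, mul_nonneg (mul_nonneg hx hx) hx]

theorem eval_charpoly_piClosedLoop (γr γp kp k1 k2 : ℝ) (μ : ℂ) :
    ((!![-γr, -k1, k2; kp, -γp, 0; 0, -1, 0] : Matrix (Fin 3) (Fin 3) ℝ).map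
        Complex.ofReal).charpoly.eval μ =
      μ ^ 3 + ↑(γr + γp) * μ ^ 2 + ↑(γr * γp + kp * k1) * μ + ↑(kp * k2) := by
  rw [Matrix.eval_charpoly, Matrix.det_fin_three]
  simp
  ring

theorem routhHurwitz_coeffs_of_gain_bound {kpP γpM γrM k1 k2 kp γp γr : ℝ}
    (hγpM : 0 < γpM) (hγrM : 0 < γrM) (hk2 : 0 < k2)
    (hk1 : k1 > k2 / (γpM + γrM) - γrM * γpM / kpP)
    (hkp : 0 < kp) (hkpP : kp ≤ kpP) (hγp : γpM ≤ γp) (hγr : γrM ≤ γr) :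
    0 < γr + γp ∧ 0 < γr * γp + kp * k1 ∧ 0 < kp * k2 ∧
      kp * k2 < (γr + γp) * (γr * γp + kp * k1) := by
  have hS : 0 < γpM + γrM := by positivity
  have hP : γrM * γpM ≤ γr * γp := mul_le_mul hγr hγp hγpM.le (hγrM.trans_le hγr).le
  have hbound : kp * k2 / (γpM + γrM) < γrM * γpM + kp * k1 :=
    calc kp * k2 / (γpM + γrM) = kp * (k2 / (γpM + γrM)) := mul_div_assoc _ _ _
      _ < kp * (k1 + γrM * γpM / kpP) := by gcongr; linarith
      _ = γrM * γpM * (kp / kpP) + kp * k1 := by ring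
      _ ≤ γrM * γpM + kp * k1 := add_le_add_left (mul_le_of_le_one_right (by positivity)
            (div_le_one_of_le₀ hkpP (hkp.trans_le hkpP).le)) _
  have hc : 0 < kp * k2 := mul_pos hkp hk2
  have hq : 0 < γrM * γpM + kp * k1 := (div_pos hc hS).trans hbound
  refine ⟨by linarith, by linarith, hc, ?_⟩
  calc kp * k2 < (γpM + γrM) * (γrM * γpM + kp * k1) := (div_lt_iff₀' hS).mp hbound
    _ ≤ (γr + γp) * (γrM * γpM + kp * k1) := mul_le_mul_of_nonneg_right (by linarith) hq.le
    _ ≤ (γr + γp) * (γr * γp + kp * k1) := by gcongr; linarith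

theorem stmt1_general (kpP γpM γrM k1 k2 : ℝ)
    (hγpM : 0 < γpM) (hγrM : 0 < γrM)
    (hk2 : k2 > 0) (hk1 : k1 > k2 / (γpM + γrM) - γrM * γpM / kpP) :
    ∀ kp γp γr : ℝ, 0 < kp → kp ≤ kpP → γpM ≤ γp → γrM ≤ γr →
      IsHurwitz !![-γr, -k1, k2; kp, -γp, 0; 0, -1, 0] := by
  intro kp γp γr hkp hkpP hγp hγr μ hμ
  rw [Matrix.mem_spectrum_iff_isRoot_charpoly, Polynomial.IsRoot.def,
    eval_charpoly_piClosedLoop] at hμ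
  obtain ⟨ha, hb, hc, habc⟩ :=
    routhHurwitz_coeffs_of_gain_bound hγpM hγrM hk2 hk1 hkp hkpP hγp hγr
  exact re_neg_of_cubic_eq_zero ha hb hc habc hμ

theorem stmt1 (kpP γpM γrM k1 k2 : ℝ)
    (hkpP : 0 < kpP) (hγpM : 0 < γpM) (hγrM : 0 < γrM)
    (hk2 : k2 > 0) (hk1 : k1 > k2 / (γpM + γrM) - γrM * γpM / kpP) :
    ∀ kp γp γr : ℝ, 0 < kp → kp ≤ kpP → γpM ≤ γp → γrM ≤ γr →
      IsHurwitz !![-γr, -k1, k2; kp, -γp, 0; 0, -1, 0] :=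
  stmt1_general kpP γpM γrM k1 k2 hγpM hγrM hk2 hk1
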